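/- Let G = ℂ^d ⋊ ℂ with multiplication (u,s)·(v,t) = (u + e^{sJ}v, s+t) for a fixed matrix J ∈ M_d(ℂ). The measure dμ_L(v,t) = e^{-2 tr(Re(tJ))} dv dt on ℂ^d × ℂ (with dv dt Lebesgue measure on ℝ^{2d+2}) is invariant under left translation by every element of G. -/

import Mathlib

open Matrix MeasureTheory NormedSpace
open scoped ENNReal

variable {m : Type*} [Fintype m] [DecidableEq m]

/-- `det (exp A) = exp (trace A)` for real matrices. -/
theorem det_exp_real (A : Matrix m m ℝ) :
    (NormedSpace.exp A).det = Real.exp A.trace := by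
  letI : SeminormedRing (Matrix m m ℝ) := Matrix.linftyOpSemiNormedRing
  letI : NormedRing (Matrix m m ℝ) := Matrix.linftyOpNormedRing
  letI : NormedAlgebra ℝ (Matrix m m ℝ) := Matrix.linftyOpNormedAlgebra
  letI : NormedAlgebra ℚ (Matrix m m ℝ) := NormedAlgebra.restrictScalars ℚ ℝ _
  -- entry evaluation as a continuous linear map
  let E : m → m → (Matrix m m ℝ →L[ℝ] ℝ) := fun i j =>
    LinearMap.toContinuousLinearMap
      (((LinearMap.proj j : (m → ℝ) →ₗ[ℝ] ℝ).comp
        (LinearMap.proj i : (m → m → ℝ) →ₗ[ℝ] (m → ℝ))) : Matrix m m ℝ →ₗ[ℝ] ℝ)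
  have hE : ∀ i j (M : Matrix m m ℝ), E i j M = M i j := fun _ _ _ => rfl
  -- derivative of entries of exp (t • A)
  have hent : ∀ (t : ℝ) i j, HasDerivAt (fun t : ℝ => (exp (t • A)) i j)
      ((exp (t • A) * A) i j) t := by
    intro t i j
    have h1 : HasDerivAt (fun t : ℝ => exp (t • A)) (exp (t • A) * A) t :=
      hasDerivAt_exp_smul_const A t
    exact ((E i j).hasFDerivAt.comp_hasDerivAt t h1)
  -- derivative of ψ t = det (exp (t • A)) at 0 is trace A
  have h0 : HasDerivAt (fun t : ℝ => (exp (t • A)).det) A.trace 0 := by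
    have key : ∀ t : ℝ, (exp (t • A)).det =
        ∑ σ : Equiv.Perm m, (↑↑(Equiv.Perm.sign σ) : ℝ) * ∏ i : m, (exp (t • A)) (σ i) i :=
      fun t => Matrix.det_apply' _
    have hσ : ∀ σ : Equiv.Perm m, HasDerivAt
        (fun t : ℝ => (↑↑(Equiv.Perm.sign σ) : ℝ) * ∏ i : m, (exp (t • A)) (σ i) i)
        ((↑↑(Equiv.Perm.sign σ) : ℝ) * ∑ i : m,
          (∏ j ∈ Finset.univ.erase i, (exp ((0:ℝ) • A)) (σ j) j) •
            ((exp ((0:ℝ) • A) * A) (σ i) i)) 0 := by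
      intro σ
      exact (HasDerivAt.fun_finsetProd (fun i _ => hent 0 (σ i) i)).const_mul _
    have hsum := HasDerivAt.fun_sum (u := Finset.univ) (fun σ _ => hσ σ)
    have : (fun t : ℝ => (exp (t • A)).det) =
        fun t => ∑ σ : Equiv.Perm m, (↑↑(Equiv.Perm.sign σ) : ℝ) *
          ∏ i : m, (exp (t • A)) (σ i) i := funext key
    rw [this]
    refine hsum.congr_deriv ?_
    -- value of the derivative is trace A
    rw [Finset.sum_eq_single (1 : Equiv.Perm m)]
    · simp only [Equiv.Perm.sign_one, Units.val_one, Int.cast_one, one_mul, Equiv.Perm.one_apply]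
      simp only [zero_smul, exp_zero, one_mul]
      rw [Matrix.trace]
      congr 1
      ext i
      rw [Finset.prod_eq_one, one_smul]
      · rfl
      intro j _
      exact Matrix.one_apply_eq _
    · intro σ _ hσ1
      rw [Finset.sum_eq_zero, mul_zero]
      intro i _
      -- σ ≠ 1 moves at least two points
      obtain ⟨a, ha⟩ : ∃ a, σ a ≠ a := by
        by_contra h
        push_neg at h
        exact hσ1 (Equiv.ext fun x => h x)
      have hb : σ (σ a) ≠ σ a := fun h => ha (σ.injective h)
      obtain ⟨c, hc, hci⟩ : ∃ c, σ c ≠ c ∧ c ≠ i := by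
        rcases eq_or_ne a i with rfl | h
        · exact ⟨σ a, hb, ha⟩
        · exact ⟨a, ha, h⟩
      rw [Finset.prod_eq_zero (Finset.mem_erase.2 ⟨hci, Finset.mem_univ c⟩), zero_smul]
      simp only [zero_smul, exp_zero]
      exact Matrix.one_apply_ne hc
    · intro h
      exact absurd (Finset.mem_univ _) h
  -- derivative at any point
  have hψ : ∀ s : ℝ, HasDerivAt (fun t : ℝ => (exp (t • A)).det)
      ((exp (s • A)).det * A.trace) s := by
    intro s
    have hsub : HasDerivAt (fun t : ℝ => t - s) 1 s := (hasDerivAt_id s).sub_const s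
    have h0' : HasDerivAt (fun t : ℝ => (exp (t • A)).det) A.trace (s - s) := by
      rw [sub_self]; exact h0
    have hcomp : HasDerivAt (fun t : ℝ => (exp ((t - s) • A)).det) (A.trace * 1) s :=
      HasDerivAt.comp (h := fun t : ℝ => t - s) s h0' hsub
    have hfun : (fun t : ℝ => (exp (t • A)).det)
        = fun t => (exp (s • A)).det * (exp ((t - s) • A)).det := by
      funext t
      have hcomm : Commute (s • A) ((t - s) • A) :=
        ((Commute.refl A).smul_left s).smul_right (t - s)
      rw [← Matrix.det_mul]
      erw [← NormedSpace.exp_add_of_commute hcomm]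
      congr 2
      module
    rw [hfun]
    have := hcomp.const_mul ((exp (s • A)).det)
    refine this.congr_deriv ?_
    ring
  -- the auxiliary function is constant
  set φ : ℝ → ℝ := fun t => (exp (t • A)).det * Real.exp (-(t * A.trace)) with hφdef
  have hφ : ∀ s : ℝ, HasDerivAt φ 0 s := by
    intro s
    have hexp : HasDerivAt (fun t : ℝ => Real.exp (-(t * A.trace)))
        (Real.exp (-(s * A.trace)) * -A.trace) s := by
      have h1 : HasDerivAt (fun t : ℝ => -(t * A.trace)) (-A.trace) s := by
        simpa using ((hasDerivAt_id s).mul_const A.trace).fun_neg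
      simpa [Function.comp_def] using (Real.hasDerivAt_exp _).comp s h1
    have := (hψ s).mul hexp
    refine this.congr_deriv ?_
    ring
  have hconst := is_const_of_deriv_eq_zero (fun s => (hφ s).differentiableAt)
    (fun s => (hφ s).deriv) 1 0
  have h1 : φ 0 = 1 := by
    simp [hφdef, Matrix.det_one]
  rw [h1] at hconst
  have : (exp ((1:ℝ) • A)).det * Real.exp (-(1 * A.trace)) = 1 := hconst
  rw [one_smul, one_mul, Real.exp_neg] at this
  field_simp at this
  linarith [this]

noncomputable section

/-- Real basis of `Fin d → ℂ`. -/
def bR (d : ℕ) : Module.Basis ((_ : Fin d) × Fin 2) ℝ (Fin d → ℂ) :=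
  Pi.basis fun _ => Complex.basisOneI

/-- Realification of a complex matrix, as a ring homomorphism. -/
def realify (d : ℕ) : Matrix (Fin d) (Fin d) ℂ →+*
    Matrix ((_ : Fin d) × Fin 2) ((_ : Fin d) × Fin 2) ℝ where
  toFun N := LinearMap.toMatrix (bR d) (bR d) ((Matrix.toLin' N).restrictScalars ℝ)
  map_one' := by
    show LinearMap.toMatrix (bR d) (bR d) ((Matrix.toLin' 1).restrictScalars ℝ) = 1
    rw [Matrix.toLin'_one]
    rw [show (LinearMap.id : (Fin d → ℂ) →ₗ[ℂ] _).restrictScalars ℝ = LinearMap.id from rfl]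
    exact LinearMap.toMatrix_id _
  map_mul' M N := by
    show LinearMap.toMatrix (bR d) (bR d) ((Matrix.toLin' (M * N)).restrictScalars ℝ) = _
    rw [Matrix.toLin'_mul]
    rw [show ((Matrix.toLin' M).comp (Matrix.toLin' N)).restrictScalars ℝ
        = ((Matrix.toLin' M).restrictScalars ℝ).comp ((Matrix.toLin' N).restrictScalars ℝ)
      from rfl]
    exact LinearMap.toMatrix_comp _ (bR d) _ _ _
  map_zero' := by
    show LinearMap.toMatrix (bR d) (bR d) ((Matrix.toLin' 0).restrictScalars ℝ) = 0
    rw [LinearEquiv.map_zero]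
    rw [show ((0 : (Fin d → ℂ) →ₗ[ℂ] _)).restrictScalars ℝ = 0 from rfl,
      LinearEquiv.map_zero]
  map_add' M N := by
    show LinearMap.toMatrix (bR d) (bR d) ((Matrix.toLin' (M + N)).restrictScalars ℝ) = _
    rw [LinearEquiv.map_add]
    rw [show (Matrix.toLin' M + Matrix.toLin' N).restrictScalars ℝ
        = (Matrix.toLin' M).restrictScalars ℝ + (Matrix.toLin' N).restrictScalars ℝ from rfl,
      map_add]

theorem continuous_realify (d : ℕ) : Continuous (realify d) := by
  let ΨL : Matrix (Fin d) (Fin d) ℂ →ₗ[ℝ]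
      Matrix ((_ : Fin d) × Fin 2) ((_ : Fin d) × Fin 2) ℝ :=
    (LinearMap.toMatrix (bR d) (bR d)).toLinearMap.comp
      ((LinearMap.restrictScalarsₗ ℝ ℂ (Fin d → ℂ) (Fin d → ℂ) ℝ).comp
        ((Matrix.toLin' : Matrix (Fin d) (Fin d) ℂ ≃ₗ[ℂ]
          ((Fin d → ℂ) →ₗ[ℂ] (Fin d → ℂ))).toLinearMap.restrictScalars ℝ))
  exact ΨL.continuous_of_finiteDimensional

theorem trace_realify (d : ℕ) (N : Matrix (Fin d) (Fin d) ℂ) :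
    (realify d N).trace = 2 * N.trace.re := by
  rw [Matrix.trace]
  rw [show (Finset.univ : Finset ((_ : Fin d) × Fin 2))
      = Finset.univ.sigma fun _ => Finset.univ from (Finset.univ_sigma_univ).symm]
  rw [Finset.sum_sigma]
  have hentry : ∀ (j : Fin d) (k : Fin 2),
      (realify d N).diag ⟨j, k⟩ = (Complex.basisOneI.repr (N j j * Complex.basisOneI k)) k := by
    intro j k
    show (LinearMap.toMatrix (bR d) (bR d) ((Matrix.toLin' N).restrictScalars ℝ)) ⟨j,k⟩ ⟨j,k⟩ = _
    rw [LinearMap.toMatrix_apply]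
    show ((bR d).repr ((Matrix.toLin' N) ((bR d) ⟨j, k⟩))) ⟨j, k⟩ = _
    rw [show ((bR d) ⟨j, k⟩) = Pi.single j (Complex.basisOneI k) from Pi.basis_apply _ _]
    rw [Matrix.toLin'_apply, Matrix.mulVec_single]
    rw [show ∀ x, ((bR d).repr x) ⟨j, k⟩ = (Complex.basisOneI.repr (x j)) k from
      fun x => Pi.basis_repr _ _ _]
    rfl
  calc ∑ j : Fin d, ∑ k : Fin 2, (realify d N).diag ⟨j, k⟩
      = ∑ j : Fin d, 2 * (N j j).re := by
        refine Finset.sum_congr rfl fun j _ => ?_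
        rw [Fin.sum_univ_two, hentry, hentry]
        simp [Complex.coe_basisOneI_repr, Complex.coe_basisOneI]
        ring
    _ = 2 * N.trace.re := by
        rw [Matrix.trace, Complex.re_sum, Finset.mul_sum]
        simp [Matrix.diag]

end

theorem det_realify_exp (d : ℕ) (B : Matrix (Fin d) (Fin d) ℂ) :
    LinearMap.det ((Matrix.toLin' (NormedSpace.exp B)).restrictScalars ℝ)
      = Real.exp (2 * B.trace.re) := by
  letI : SeminormedRing (Matrix (Fin d) (Fin d) ℂ) := Matrix.linftyOpSemiNormedRing
  letI : NormedRing (Matrix (Fin d) (Fin d) ℂ) := Matrix.linftyOpNormedRing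
  letI : NormedAlgebra ℝ (Matrix (Fin d) (Fin d) ℂ) := Matrix.linftyOpNormedAlgebra
  letI : NormedAlgebra ℚ (Matrix (Fin d) (Fin d) ℂ) := NormedAlgebra.restrictScalars ℚ ℝ _
  letI : SeminormedRing (Matrix ((_ : Fin d) × Fin 2) ((_ : Fin d) × Fin 2) ℝ) :=
    Matrix.linftyOpSemiNormedRing
  letI : NormedRing (Matrix ((_ : Fin d) × Fin 2) ((_ : Fin d) × Fin 2) ℝ) :=
    Matrix.linftyOpNormedRing
  letI : NormedAlgebra ℝ (Matrix ((_ : Fin d) × Fin 2) ((_ : Fin d) × Fin 2) ℝ) :=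
    Matrix.linftyOpNormedAlgebra
  have h1 : LinearMap.det ((Matrix.toLin' (NormedSpace.exp B)).restrictScalars ℝ)
      = (realify d (NormedSpace.exp B)).det :=
    (LinearMap.det_toMatrix (bR d) _).symm
  have h2 : NormedSpace.exp B = NormedSpace.exp B := by
    rfl
  rw [h1, h2]
  erw [map_exp (realify d) (continuous_realify d), det_exp_real, trace_realify]

theorem map_withDensity_comp {α : Type*} [MeasurableSpace α] (μ : Measure α) {T : α → α}
    (hT : Measurable T) {g : α → ℝ≥0∞} (hg : Measurable g) :
    Measure.map T (μ.withDensity (fun x => g (T x))) = (Measure.map T μ).withDensity g := by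
  ext A hA
  rw [Measure.map_apply hT hA, withDensity_apply _ (hT hA), withDensity_apply _ hA,
    MeasureTheory.setLIntegral_map hA hg hT]

/-- the measure `e^{-2 tr(Re(tJ))} dv dt` on `ℂ^d × ℂ` is invariant under
left translation `(v,t) ↦ (u + e^{sJ}v, s+t)` by every element `(u,s)` of the group
`G = ℂ^d ⋊ ℂ`. -/
theorem stmt_2 (d : ℕ) (J : Matrix (Fin d) (Fin d) ℂ)
    (μL : Measure ((Fin d → ℂ) × ℂ))
    (hμL : μL = volume.withDensity
      (fun p => ENNReal.ofReal (Real.exp (-2 * Matrix.trace ((p.2 • J).map Complex.re))))) :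
    ∀ u : Fin d → ℂ, ∀ s : ℂ,
      Measure.map
        (fun p : (Fin d → ℂ) × ℂ => (u + (NormedSpace.exp (s • J)).mulVec p.1, s + p.2))
        μL = μL := by
  intro u s
  haveI : (volume : Measure ((Fin d → ℂ) × ℂ)).IsAddHaarMeasure :=
    MeasureTheory.Measure.prod.instIsAddHaarMeasure volume volume
  set c : ℝ := (s * J.trace).re with hc
  -- the density
  set f : (Fin d → ℂ) × ℂ → ℝ≥0∞ :=
    fun p => ENNReal.ofReal (Real.exp (-2 * (p.2 * J.trace).re)) with hfdef
  have hdens : ∀ t : ℂ, Matrix.trace ((t • J).map Complex.re) = (t * J.trace).re := by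
    intro t
    simp [Matrix.trace, Matrix.diag, Matrix.map_apply, Matrix.smul_apply, smul_eq_mul,
      Complex.re_sum, Finset.mul_sum]
  have hμL2 : μL = volume.withDensity f := by
    rw [hμL]
    congr 1
    funext p
    rw [hdens p.2]
  have hf : Measurable f := by
    refine ENNReal.measurable_ofReal.comp (Real.continuous_exp.comp ?_).measurable
    exact continuous_const.mul (Complex.continuous_re.comp (continuous_snd.mul continuous_const))
  -- the translation map
  set M : Matrix (Fin d) (Fin d) ℂ := NormedSpace.exp (s • J) with hM
  set T : (Fin d → ℂ) × ℂ → (Fin d → ℂ) × ℂ :=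
    fun p => (u + M.mulVec p.1, s + p.2) with hT
  set L : ((Fin d → ℂ) × ℂ) →ₗ[ℝ] ((Fin d → ℂ) × ℂ) :=
    ((Matrix.toLin' M).restrictScalars ℝ).prodMap (LinearMap.id : ℂ →ₗ[ℝ] ℂ) with hL
  have hLcont : Continuous L := L.continuous_of_finiteDimensional
  have hTeq : T = (fun p => ((u, s) : (Fin d → ℂ) × ℂ) + p) ∘ L := by
    funext p
    refine Prod.ext ?_ rfl
    show u + M.mulVec p.1 = u + Matrix.toLin' M p.1
    rw [Matrix.toLin'_apply]
  have hTmeas : Measurable T := by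
    rw [hTeq]
    exact ((continuous_const.add continuous_id).comp hLcont).measurable
  -- determinant of L
  have hdet : LinearMap.det L = Real.exp (2 * c) := by
    rw [← LinearMap.det_toMatrix ((bR d).prod Complex.basisOneI),
      LinearMap.toMatrix_prodMap, Matrix.det_fromBlocks_zero₂₁,
      LinearMap.toMatrix_id, Matrix.det_one, mul_one,
      LinearMap.det_toMatrix, hM, det_realify_exp d (s • J), Matrix.trace_smul,
      smul_eq_mul, hc]
  -- scaling factor
  set k : ℝ≥0∞ := ENNReal.ofReal (Real.exp (-2 * c)) with hk
  have hk0 : k ≠ 0 := ne_of_gt (ENNReal.ofReal_pos.2 (Real.exp_pos _))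
  have hktop : k ≠ ⊤ := ENNReal.ofReal_ne_top
  have hmapvol : Measure.map T volume = k • volume := by
    rw [hTeq, ← Measure.map_map (by measurability) hLcont.measurable,
      Measure.map_linearMap_addHaar_eq_smul_addHaar volume
        (by rw [hdet]; positivity),
      Measure.map_smul, MeasureTheory.map_add_left_eq_self]
    congr 1
    rw [hdet, hk, abs_of_pos (by positivity), ← Real.exp_neg]
    ring_nf
  -- the shifted density
  set g : (Fin d → ℂ) × ℂ → ℝ≥0∞ := fun p => k⁻¹ * f p with hg
  have hgmeas : Measurable g := hf.const_mul _
  have hgT : ∀ p, g (T p) = f p := by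
    intro p
    have h1 : f (T p) = k * f p := by
      rw [hfdef]
      show ENNReal.ofReal (Real.exp (-2 * ((s + p.2) * J.trace).re)) = _
      rw [add_mul, Complex.add_re, ← hc]
      rw [show -2 * (c + (p.2 * J.trace).re) = -2 * c + -2 * (p.2 * J.trace).re by ring,
        Real.exp_add, ENNReal.ofReal_mul (Real.exp_pos _).le, hk]
    show k⁻¹ * f (T p) = f p
    rw [h1, ← mul_assoc, ENNReal.inv_mul_cancel hk0 hktop, one_mul]
  -- assemble
  calc Measure.map T μL = Measure.map T (volume.withDensity (fun p => g (T p))) := by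
        rw [hμL2]
        congr 1
        exact congrArg _ (funext fun p => (hgT p).symm)
    _ = (Measure.map T volume).withDensity g := map_withDensity_comp volume hTmeas hgmeas
    _ = (k • volume).withDensity g := by rw [hmapvol]
    _ = k • (volume.withDensity g) := withDensity_smul_measure k g
    _ = volume.withDensity (fun p => k * (k⁻¹ * f p)) := by
        rw [← withDensity_smul k hgmeas]
        rfl
    _ = volume.withDensity f := by
        congr 1
        funext p
        rw [← mul_assoc, ENNReal.mul_inv_cancel hk0 hktop, one_mul]
    _ = μL := hμL2.symm
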